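/- Let k be an odd positive integer and let G be a group such that (g ⊗ g)^k = 1 in G ⊗ G for all g ∈ G. Then the short exact sequence 1 → ∇(G) → G ⊗ G → G ∧ G → 1 splits on the left, via the homomorphism α′ : G ⊗ G → ∇(G) defined on generators by α′(g ⊗ h) = [(g ⊗ h)(h ⊗ g)]^{-n} where k = 2n+1; consequently G ⊗ G ≅ ∇(G) × (G ∧ G). In particular, if G has odd exponent then π₃(SK(G,1)) ≅ H₂(G) × ∇(G) ≅ π₂ˢ(K(G,1)) × ∇(G). -/

import Mathlib

/- Nonabelian tensor square framework (Brown–Loday). -/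

namespace NATensor

variable (G : Type*) [Group G]

/-- The relator set for the nonabelian tensor square of `G`:
`g g' ⊗ h = (ᵍg' ⊗ ᵍh)(g ⊗ h)` and `g ⊗ h h' = (g ⊗ h)(ʰg ⊗ ʰh')`. -/
def rels : Set (FreeGroup (G × G)) :=
  {r | (∃ g g' h : G,
          r = FreeGroup.of (g * g', h) *
              (FreeGroup.of (g * g' * g⁻¹, g * h * g⁻¹) * FreeGroup.of (g, h))⁻¹) ∨
       (∃ g h h' : G,
          r = FreeGroup.of (g, h * h') *
              (FreeGroup.of (g, h) * FreeGroup.of (h * g * h⁻¹, h * h' * h⁻¹))⁻¹)}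

/-- The nonabelian tensor square `G ⊗ G`. -/
abbrev TS := PresentedGroup (rels G)

variable {G}

/-- The generator `g ⊗ h` of the nonabelian tensor square. -/
def tmul (g h : G) : TS G := PresentedGroup.of (g, h)

lemma mk_rel_eq_one {r : FreeGroup (G × G)} (hr : r ∈ rels G) :
    (PresentedGroup.mk (rels G) r : TS G) = 1 :=
  (QuotientGroup.eq_one_iff r).mpr (Subgroup.subset_normalClosure hr)

lemma tmul_rel₁ (g g' h : G) :
    tmul (g * g') h = tmul (g * g' * g⁻¹) (g * h * g⁻¹) * tmul g h := by
  have h1 := mk_rel_eq_one (G := G) (Or.inl ⟨g, g', h, rfl⟩)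
  simp only [map_mul, map_inv, mul_inv_eq_one] at h1
  exact h1

lemma tmul_rel₂ (g h h' : G) :
    tmul g (h * h') = tmul g h * tmul (h * g * h⁻¹) (h * h' * h⁻¹) := by
  have h1 := mk_rel_eq_one (G := G) (Or.inr ⟨g, h, h', rfl⟩)
  simp only [map_mul, map_inv, mul_inv_eq_one] at h1
  exact h1

variable (G)

/-- The homomorphism `κ : G ⊗ G → G`, `g ⊗ h ↦ [g,h] = g h g⁻¹ h⁻¹` (its image is `[G,G]`). -/
def kappa : TS G →* G :=
  PresentedGroup.toGroup (f := fun x : G × G => x.1 * x.2 * x.1⁻¹ * x.2⁻¹) (by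
    rintro r (⟨g, g', h, rfl⟩ | ⟨g, h, h', rfl⟩) <;>
      simp only [map_mul, map_inv, FreeGroup.lift_apply_of] <;> group)

variable {G}

@[simp] lemma kappa_tmul (g h : G) : kappa G (tmul g h) = g * h * g⁻¹ * h⁻¹ :=
  PresentedGroup.toGroup.of _

variable (G)

/-- `J(G) = ker κ ≅ π₃(SK(G,1))`. -/
def J : Subgroup (TS G) := (kappa G).ker

/-- `∇(G)`: the (normal) subgroup of `G ⊗ G` generated by the elements `x ⊗ x`. -/
def nabla : Subgroup (TS G) :=
  Subgroup.normalClosure {t | ∃ x : G, t = tmul x x}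

/-- `Δ(G)`: the (normal) subgroup of `G ⊗ G` generated by the `(x ⊗ y)(y ⊗ x)`. -/
def delta : Subgroup (TS G) :=
  Subgroup.normalClosure {t | ∃ x y : G, t = tmul x y * tmul y x}

instance : (nabla G).Normal := Subgroup.normalClosure_normal

instance : (delta G).Normal := Subgroup.normalClosure_normal

/-- The exterior square `G ∧ G = (G ⊗ G)/∇(G)`. -/
abbrev ES := TS G ⧸ nabla G

/-- The symmetric square `G ⊗̃ G = (G ⊗ G)/Δ(G)`. -/
abbrev SS := TS G ⧸ delta G

variable {G}

/-- The element `g ∧ h` of the exterior square. -/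
def emul (g h : G) : ES G := QuotientGroup.mk' (nabla G) (tmul g h)

/-- The image of `g ⊗ h` in the symmetric square. -/
def smul (g h : G) : SS G := QuotientGroup.mk' (delta G) (tmul g h)

variable {H : Type*} [Group H]

/-- The induced homomorphism `G ⊗ G → H ⊗ H` of a homomorphism `f : G → H`. -/
def tmap (f : G →* H) : TS G →* TS H :=
  PresentedGroup.toGroup (f := fun x : G × G => tmul (f x.1) (f x.2)) (by
    rintro r (⟨g, g', h, rfl⟩ | ⟨g, h, h', rfl⟩) <;>
      simp only [map_mul, map_inv, FreeGroup.lift_apply_of, mul_inv_eq_one]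
    · rw [tmul_rel₁]
    · rw [tmul_rel₂])

@[simp] lemma tmap_tmul (f : G →* H) (g h : G) :
    tmap f (tmul g h) = tmul (f g) (f h) :=
  PresentedGroup.toGroup.of _

lemma nabla_le_comap_nabla (f : G →* H) :
    nabla G ≤ MonoidHom.ker ((QuotientGroup.mk' (nabla H)).comp (tmap f)) := by
  refine Subgroup.normalClosure_le_normal ?_
  rintro _ ⟨y, rfl⟩
  simp only [SetLike.mem_coe, MonoidHom.mem_ker, MonoidHom.comp_apply, tmap_tmul,
    QuotientGroup.mk'_apply, QuotientGroup.eq_one_iff]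
  exact Subgroup.subset_normalClosure ⟨f y, rfl⟩

lemma delta_le_comap_delta (f : G →* H) :
    delta G ≤ MonoidHom.ker ((QuotientGroup.mk' (delta H)).comp (tmap f)) := by
  refine Subgroup.normalClosure_le_normal ?_
  rintro _ ⟨x, y, rfl⟩
  simp only [SetLike.mem_coe, MonoidHom.mem_ker, MonoidHom.comp_apply, map_mul, tmap_tmul,
    QuotientGroup.mk'_apply, ← QuotientGroup.mk_mul, QuotientGroup.eq_one_iff]
  exact Subgroup.subset_normalClosure ⟨f x, f y, rfl⟩

/-- The induced homomorphism `G ∧ G → H ∧ H` of a homomorphism `f : G → H`. -/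
def emap (f : G →* H) : ES G →* ES H :=
  QuotientGroup.lift (nabla G) ((QuotientGroup.mk' (nabla H)).comp (tmap f))
    (fun x hx => MonoidHom.mem_ker.mp (nabla_le_comap_nabla f hx))

@[simp] lemma emap_emul (f : G →* H) (g h : G) :
    emap f (emul g h) = emul (f g) (f h) := by
  simp [emap, emul, QuotientGroup.mk'_apply, QuotientGroup.lift_mk']
  show (QuotientGroup.mk' (nabla H)).comp (tmap f) (tmul g h) = _
  simp only [MonoidHom.comp_apply, tmap_tmul, QuotientGroup.mk'_apply]

/-- The induced homomorphism `G ⊗̃ G → H ⊗̃ H` of a homomorphism `f : G → H`. -/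
def smap (f : G →* H) : SS G →* SS H :=
  QuotientGroup.lift (delta G) ((QuotientGroup.mk' (delta H)).comp (tmap f))
    (fun x hx => MonoidHom.mem_ker.mp (delta_le_comap_delta f hx))

variable (G)

lemma nabla_le_ker_kappa : nabla G ≤ (kappa G).ker := by
  refine Subgroup.normalClosure_le_normal ?_
  rintro _ ⟨x, rfl⟩
  simp only [SetLike.mem_coe, MonoidHom.mem_ker, kappa_tmul]
  group

/-- The homomorphism `κ' : G ∧ G → G`, `g ∧ h ↦ [g,h]` (its image is `[G,G]`). -/
def kappa' : ES G →* G :=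
  QuotientGroup.lift (nabla G) (kappa G)
    (fun x hx => MonoidHom.mem_ker.mp (nabla_le_ker_kappa G hx))

/-- The Schur multiplier `M(G) = ker κ' ≅ H₂(G)`. -/
def M : Subgroup (ES G) := (kappa' G).ker

/-- `J̃(G) = J(G)/Δ(G) ≅ π₂ˢ(K(G,1))`, realized as the image of `J(G)` in `G ⊗̃ G`. -/
def Jt : Subgroup (SS G) := Subgroup.map (QuotientGroup.mk' (delta G)) (J G)

/-- `∇(G)/Δ(G)`, realized as the image of `∇(G)` in `G ⊗̃ G`. -/
def nablaBar : Subgroup (SS G) := Subgroup.map (QuotientGroup.mk' (delta G)) (nabla G)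

end NATensor

/-!
Conjugation by `s` in `G ⊗ G` is the action of `κ(s)`, so `J(G)` and with it `∇(G)` are central.
The elements `(g ⊗ h)(h ⊗ g)` are then central, lie in `∇(G)` (expand `hg ⊗ hg`) and satisfy the
defining relations of `G ⊗ G` up to reordering central factors, so their `(-n)`-th powers define
`α' : G ⊗ G → ∇(G)`. On `x ⊗ x` it gives `(x ⊗ x)^(-2n) = x ⊗ x` because `(x ⊗ x)^(2n+1) = 1`,
so `α'` retracts `G ⊗ G` onto `∇(G)` and splits `∇(G) ↪ G ⊗ G ↠ G ∧ G` as well as its restriction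
to `J(G)`; the same computation gives `Δ(G) = ∇(G)`.
-/

theorem Subgroup.normalClosure_eq_closure_of_subset_center {G : Type*} [Group G] {s : Set G}
    (hs : s ⊆ Subgroup.center G) : Subgroup.normalClosure s = Subgroup.closure s := by
  have hcen : Subgroup.closure s ≤ Subgroup.center G := (Subgroup.closure_le _).mpr hs
  have : (Subgroup.closure s).Normal :=
    ⟨fun m hm g => by rw [Subgroup.mem_center_iff.mp (hcen hm) g, mul_inv_cancel_right]; exact hm⟩
  exact le_antisymm (Subgroup.normalClosure_le_normal Subgroup.subset_closure)
    Subgroup.closure_le_normalClosure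

theorem MonoidHom.prod_bijective_of_ker_eq_range {K A B : Type*} [Group K] [Group A] [Group B]
    (q : K →* A) (r : K →* B) (s : B →* K) (hq : Function.Surjective q)
    (hker : q.ker = s.range) (hrs : ∀ b, r (s b) = b) :
    Function.Bijective (q.prod r) := by
  have hqs : ∀ b, q (s b) = 1 := fun b => (hker.ge ⟨b, rfl⟩ : s b ∈ q.ker)
  refine ⟨(injective_iff_map_eq_one _).mpr fun x hx => ?_, fun ⟨a, b⟩ => ?_⟩
  · obtain ⟨b, rfl⟩ : x ∈ s.range := hker ▸ congrArg Prod.fst hx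
    rw [← hrs b, show r (s b) = 1 from congrArg Prod.snd hx, map_one]
  · obtain ⟨y, rfl⟩ := hq a
    refine ⟨s b * y * s (r y)⁻¹, ?_⟩
    simp [hqs, hrs]

namespace NATensor

variable {G : Type*} [Group G]

theorem ext_tmul {H : Type*} [Group H] {φ ψ : TS G →* H}
    (h : ∀ g g' : G, φ (tmul g g') = ψ (tmul g g')) : φ = ψ :=
  PresentedGroup.ext fun x => h x.1 x.2

instance : MulDistribMulAction G (TS G) where
  smul a := tmap (MulAut.conj a).toMonoidHom
  one_smul t := DFunLike.congr_fun (ext_tmul (φ := tmap (MulAut.conj 1).toMonoidHom)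
    (ψ := MonoidHom.id _) fun g h => by simp) t
  mul_smul a b t := DFunLike.congr_fun (ext_tmul
    (φ := tmap (MulAut.conj (a * b)).toMonoidHom)
    (ψ := (tmap (MulAut.conj a).toMonoidHom).comp (tmap (MulAut.conj b).toMonoidHom))
    fun g h => by simp [mul_assoc]) t
  smul_mul a := map_mul _
  smul_one a := map_one _

@[simp] theorem smul_tmul (a g h : G) : a • tmul g h = tmul (a * g * a⁻¹) (a * h * a⁻¹) :=
  tmap_tmul _ g h

theorem tmul_mul_left (a b c : G) : tmul (a * b) c = a • tmul b c * tmul a c := by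
  rw [tmul_rel₁, smul_tmul]

theorem tmul_mul_right (a b c : G) : tmul a (b * c) = tmul a b * b • tmul a c := by
  rw [tmul_rel₂, smul_tmul]

theorem smul_tmul_mul_tmul (g h x y : G) :
    (g * h) • tmul x y * tmul g h = tmul g h * (h * g) • tmul x y := by
  have expand₁ : tmul (g * x) (h * y) =
      g • tmul x h * ((g * h) • tmul x y * tmul g h) * h • tmul g y := by
    rw [tmul_mul_left, tmul_mul_right, tmul_mul_right, smul_mul', mul_smul]
    group
  have expand₂ : tmul (g * x) (h * y) =
      g • tmul x h * (tmul g h * (h * g) • tmul x y) * h • tmul g y := by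
    rw [tmul_mul_right, tmul_mul_left, tmul_mul_left, smul_mul', mul_smul]
    group
  exact mul_left_cancel (mul_right_cancel (expand₁.symm.trans expand₂))

theorem tmul_mul_smul_mul_inv (g h : G) (t : TS G) :
    tmul g h * (h * g) • t * (tmul g h)⁻¹ = (g * h) • t := by
  have : (MulAut.conj (tmul g h)).toMonoidHom.comp
      (MulDistribMulAction.toMonoidHom (TS G) (h * g)) =
      MulDistribMulAction.toMonoidHom (TS G) (g * h) :=
    ext_tmul fun x y => by
      simp only [MonoidHom.comp_apply, MulEquiv.coe_toMonoidHom, MulAut.conj_apply,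
        MulDistribMulAction.toMonoidHom_apply]
      rw [← smul_tmul_mul_tmul, mul_inv_cancel_right]
  simpa [MulAut.conj_apply] using DFunLike.congr_fun this t

theorem tmul_mul_mul_inv (g h : G) (t : TS G) :
    tmul g h * t * (tmul g h)⁻¹ = (g * h * g⁻¹ * h⁻¹) • t := by
  simpa [← mul_smul, mul_assoc] using tmul_mul_smul_mul_inv g h ((h * g)⁻¹ • t)

theorem mulAut_conj_eq_toMulAut_comp_kappa :
    (MulAut.conj : TS G →* MulAut (TS G)) =
      (MulDistribMulAction.toMulAut G (TS G)).comp (kappa G) :=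
  ext_tmul fun g h => MulEquiv.ext fun t => by simpa using tmul_mul_mul_inv g h t

theorem mul_mul_inv_eq_kappa_smul (s t : TS G) : s * t * s⁻¹ = kappa G s • t := by
  simpa using DFunLike.congr_fun (DFunLike.congr_fun mulAut_conj_eq_toMulAut_comp_kappa s) t

theorem J_le_center : J G ≤ Subgroup.center (TS G) := fun s hs =>
  Subgroup.mem_center_iff.mpr fun t => by
    have := mul_mul_inv_eq_kappa_smul s t
    rw [MonoidHom.mem_ker.mp hs, one_smul] at this
    exact (mul_inv_eq_iff_eq_mul.mp this).symm

theorem nabla_le_J : nabla G ≤ J G :=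
  nabla_le_ker_kappa G

theorem nabla_le_center : nabla G ≤ Subgroup.center (TS G) :=
  nabla_le_J.trans J_le_center

theorem tmul_self_mem_nabla (x : G) : tmul x x ∈ nabla G :=
  Subgroup.subset_normalClosure ⟨x, rfl⟩

theorem nabla_eq_closure : nabla G = Subgroup.closure {t : TS G | ∃ x : G, t = tmul x x} :=
  Subgroup.normalClosure_eq_closure_of_subset_center fun _ ⟨x, hx⟩ =>
    hx ▸ nabla_le_center (tmul_self_mem_nabla x)

theorem tmap_mem_nabla {H : Type*} [Group H] (f : G →* H) {t : TS G} (ht : t ∈ nabla G) :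
    tmap f t ∈ nabla H :=
  (QuotientGroup.eq_one_iff _).mp (nabla_le_comap_nabla f ht)

theorem smul_mem_nabla (a : G) {t : TS G} (ht : t ∈ nabla G) : a • t ∈ nabla G :=
  tmap_mem_nabla _ ht

def tsymm (g h : G) : TS G := tmul g h * tmul h g

theorem tsymm_mem_J (g h : G) : tsymm g h ∈ J G := by
  show kappa G (tmul g h * tmul h g) = 1
  rw [map_mul, kappa_tmul, kappa_tmul]
  group

theorem commute_tsymm (g h : G) (t : TS G) : Commute (tsymm g h) t :=
  (Subgroup.mem_center_iff.mp (J_le_center (tsymm_mem_J g h)) t).symm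

theorem smul_tsymm (a g h : G) : a • tsymm g h = tsymm (a * g * a⁻¹) (a * h * a⁻¹) := by
  rw [tsymm, tsymm, smul_mul', smul_tmul, smul_tmul]

theorem tsymm_mul_left (g g' h : G) : tsymm (g * g') h = g • tsymm g' h * tsymm g h :=
  calc tsymm (g * g') h = g • tmul g' h * (tsymm g h * g • tmul h g') := by
        simp only [tsymm, tmul_mul_left, tmul_mul_right]; group
    _ = g • tmul g' h * (g • tmul h g' * tsymm g h) := by rw [(commute_tsymm g h _).eq]
    _ = g • tsymm g' h * tsymm g h := by simp only [tsymm, smul_mul']; group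

theorem tsymm_mul_right (g h h' : G) : tsymm g (h * h') = tsymm g h * h • tsymm g h' :=
  calc tsymm g (h * h') = tmul g h * (h • tsymm g h' * tmul h g) := by
        simp only [tsymm, tmul_mul_left, tmul_mul_right, smul_mul']; group
    _ = tmul g h * (tmul h g * h • tsymm g h') := by
        rw [smul_tsymm, (commute_tsymm _ _ _).eq]
    _ = tsymm g h * h • tsymm g h' := by simp only [tsymm]; group

theorem tsymm_mem_nabla (g h : G) : tsymm g h ∈ nabla G := by
  have hc : (h * h) • tmul g g * tmul h h ∈ nabla G :=
    mul_mem (smul_mem_nabla _ (tmul_self_mem_nabla g)) (tmul_self_mem_nabla h)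
  have hexp : tmul (h * g) (h * g) = h • tsymm g h * ((h * h) • tmul g g * tmul h h) :=
    calc tmul (h * g) (h * g) =
          h • tmul g h * ((h * h) • tmul g g * tmul h h) * h • tmul h g := by
          rw [tmul_mul_left, tmul_mul_right, tmul_mul_right, smul_mul', mul_smul]; group
      _ = h • tsymm g h * ((h * h) • tmul g g * tmul h h) := by
          rw [mul_assoc, ← Subgroup.mem_center_iff.mp (nabla_le_center hc), tsymm, smul_mul',
            mul_assoc]
  have : h • tsymm g h ∈ nabla G := by
    rw [eq_mul_inv_of_mul_eq hexp.symm]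
    exact mul_mem (tmul_self_mem_nabla _) (inv_mem hc)
  simpa using smul_mem_nabla h⁻¹ this

def alpha' (n : ℕ) : TS G →* TS G :=
  PresentedGroup.toGroup (f := fun p : G × G => tsymm p.1 p.2 ^ (-(n : ℤ))) (by
    rintro r (⟨g, g', h, rfl⟩ | ⟨g, h, h', rfl⟩) <;>
      simp only [map_mul, map_inv, FreeGroup.lift_apply_of, mul_inv_eq_one]
    · rw [tsymm_mul_left, smul_tsymm, (commute_tsymm _ _ _).mul_zpow]
    · rw [tsymm_mul_right, smul_tsymm, (commute_tsymm _ _ _).mul_zpow])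

@[simp] theorem alpha'_tmul (n : ℕ) (g h : G) : alpha' n (tmul g h) = tsymm g h ^ (-(n : ℤ)) :=
  PresentedGroup.toGroup.of _

theorem alpha'_mem_nabla (n : ℕ) (t : TS G) : alpha' n t ∈ nabla G :=
  PresentedGroup.generated_by (rels G) ((nabla G).comap (alpha' n))
    (fun p => by
      rw [Subgroup.mem_comap, ← tmul, alpha'_tmul]
      exact zpow_mem (tsymm_mem_nabla p.1 p.2) _) t

def nablaRetraction (n : ℕ) : TS G →* nabla G :=
  (alpha' n).codRestrict _ (alpha'_mem_nabla n)

theorem M_eq_map_J : M G = (J G).map (QuotientGroup.mk' (nabla G)) :=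
  (Subgroup.map_comap_eq_self_of_surjective (QuotientGroup.mk'_surjective _) _).symm

section OddPower

variable {n : ℕ} (hk : ∀ g : G, tmul g g ^ (2 * n + 1) = 1)
include hk

theorem alpha'_tmul_self (x : G) : alpha' n (tmul x x) = tmul x x := by
  have hodd : tmul x x ^ ((2 * n + 1 : ℕ) : ℤ) = 1 := by exact_mod_cast hk x
  calc alpha' n (tmul x x) = tmul x x ^ (2 * -(n : ℤ)) := by
        rw [alpha'_tmul, tsymm, ← sq, ← zpow_natCast, ← zpow_mul, Nat.cast_ofNat]
    _ = tmul x x ^ (2 * -(n : ℤ)) * tmul x x ^ ((2 * n + 1 : ℕ) : ℤ) := by rw [hodd, mul_one]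
    _ = tmul x x ^ (1 : ℤ) := by rw [← zpow_add]; congr 1; push_cast; ring
    _ = tmul x x := zpow_one _

theorem alpha'_eq_self_of_mem_nabla {t : TS G} (ht : t ∈ nabla G) : alpha' n t = t := by
  rw [nabla_eq_closure] at ht
  refine (Subgroup.closure_le (MonoidHom.eqLocus (alpha' n) (MonoidHom.id _))).mpr ?_ ht
  rintro _ ⟨x, rfl⟩
  exact alpha'_tmul_self hk x

theorem delta_eq_nabla : delta G = nabla G := by
  refine le_antisymm (Subgroup.normalClosure_le_normal ?_) (Subgroup.normalClosure_le_normal ?_)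
  · rintro _ ⟨x, y, rfl⟩
    exact tsymm_mem_nabla x y
  · rintro _ ⟨x, rfl⟩
    rw [SetLike.mem_coe, ← alpha'_tmul_self hk x, alpha'_tmul]
    exact zpow_mem (Subgroup.subset_normalClosure ⟨x, x, rfl⟩ : tsymm x x ∈ delta G) _

theorem nablaRetraction_coe (t : nabla G) : nablaRetraction n t = t :=
  Subtype.ext (alpha'_eq_self_of_mem_nabla hk t.2)

theorem bijective_mk'_prod_nablaRetraction :
    Function.Bijective ((QuotientGroup.mk' (nabla G)).prod (nablaRetraction n)) :=
  MonoidHom.prod_bijective_of_ker_eq_range _ _ (nabla G).subtype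
    (QuotientGroup.mk'_surjective _) (by rw [QuotientGroup.ker_mk', Subgroup.range_subtype])
    (nablaRetraction_coe hk)

theorem bijective_subgroupMap_J_prod_nablaRetraction {Q : Type*} [Group Q] (f : TS G →* Q)
    (hf : f.ker = nabla G) :
    Function.Bijective ((f.subgroupMap (J G)).prod ((nablaRetraction n).comp (J G).subtype)) :=
  MonoidHom.prod_bijective_of_ker_eq_range _ _ (Subgroup.inclusion nabla_le_J)
    (f.subgroupMap_surjective _)
    (by rw [Subgroup.ker_subgroupMap, hf, Subgroup.inclusion_range])
    (nablaRetraction_coe hk)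

end OddPower

end NATensor

open NATensor in
/-- if `k = 2n+1` is odd and `(g ⊗ g)^k = 1` for all `g ∈ G`, then
`1 → ∇(G) → G ⊗ G → G ∧ G → 1` splits on the left via the homomorphism `α'` with
`α'(g ⊗ h) = [(g ⊗ h)(h ⊗ g)]^{-n}`, whose image lies in `∇(G)` and which restricts to the
identity on `∇(G)`; consequently `G ⊗ G ≅ ∇(G) × (G ∧ G)`.  In particular, if `G` has odd
exponent then `π₃(SK(G,1)) ≅ H₂(G) × ∇(G) ≅ π₂ˢ(K(G,1)) × ∇(G)`. -/
theorem tensor_square_splits_of_odd_power (G : Type*) [Group G] (n : ℕ)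
    (hk : ∀ g : G, (tmul g g) ^ (2 * n + 1) = 1) :
    (∃ α' : TS G →* TS G,
        (∀ g h : G, α' (tmul g h) = (tmul g h * tmul h g) ^ (-(n : ℤ))) ∧
        (∀ x ∈ nabla G, α' x = x) ∧ α'.range ≤ nabla G) ∧
    Nonempty (TS G ≃* ↥(nabla G) × ES G) ∧
    ((∀ g : G, g ^ (2 * n + 1) = 1) →
      Nonempty (↥(J G) ≃* ↥(M G) × ↥(nabla G)) ∧
      Nonempty (↥(J G) ≃* ↥(Jt G) × ↥(nabla G))) := by
  refine ⟨⟨alpha' n, alpha'_tmul n, fun _ => alpha'_eq_self_of_mem_nabla hk,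
    fun _ ⟨t, ht⟩ => ht ▸ alpha'_mem_nabla n t⟩, ?_, fun _ => ⟨?_, ?_⟩⟩
  · exact ⟨(MulEquiv.ofBijective _ (bijective_mk'_prod_nablaRetraction hk)).trans
      MulEquiv.prodComm⟩
  · rw [M_eq_map_J]
    exact ⟨MulEquiv.ofBijective _
      (bijective_subgroupMap_J_prod_nablaRetraction hk _ (QuotientGroup.ker_mk' _))⟩
  · have hker : (QuotientGroup.mk' (delta G)).ker = nabla G := by
      rw [QuotientGroup.ker_mk', delta_eq_nabla hk]
    exact ⟨MulEquiv.ofBijective _ (bijective_subgroupMap_J_prod_nablaRetraction hk _ hker)⟩
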